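/- Let 0 < p < 1, let (α_k)_{k≥0} be a strictly increasing sequence of positive integers, and let (β_k)_{k≥0} be nonnegative reals with Σ_k β_k^p < ∞. For each k set a_k := (M_{α_k}^{1/p−1}/λ) · (D_{M_{α_k+1}} − D_{M_{α_k}}), where λ = sup_k m_k. Then the sequence f = (f^{(A)})_{A≥0} defined by f^{(A)} := Σ_{{k : α_k < A}} β_k a_k is a martingale with respect to the filtration (F_A), it satisfies S_{M_A} a_k = a_k if α_k < A and S_{M_A} a_k = 0 if α_k ≥ A, and f belongs to the martingale Hardy space H_p(G_m), i.e. ‖sup_A |f^{(A)}|‖_{L^p(μ)} < ∞. -/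

import Mathlib

open MeasureTheory Filter ENNReal Finset

noncomputable section

/-- The Vilenkin group `G_m`: complete direct product of cyclic groups `ℤ_{m_k}`. -/
abbrev Gm (m : ℕ → ℕ) : Type := ∀ k : ℕ, ZMod (m k)

/-- The generalized powers `M_0 = 1`, `M_{k+1} = m_k M_k`. -/
def Mgen (m : ℕ → ℕ) : ℕ → ℕ
  | 0 => 1
  | k + 1 => m k * Mgen m k

/-- The digits of `n` in the generalized number system `n = Σ_j n_j M_j`. -/
def digit (m : ℕ → ℕ) (n j : ℕ) : ℕ := (n / Mgen m j) % m j

/-- The generalized Rademacher functions `r_k(x) = exp(2πi x_k / m_k)`. -/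
def rade (m : ℕ → ℕ) (k : ℕ) (x : Gm m) : ℂ :=
  Complex.exp (2 * Real.pi * Complex.I * ((x k).val : ℂ) / (m k : ℂ))

/-- The Vilenkin system `ψ_n = Π_k r_k^{n_k}` (all digits `n_k` with `k > n` vanish). -/
def psi (m : ℕ → ℕ) (n : ℕ) (x : Gm m) : ℂ :=
  ∏ k ∈ Finset.range (n + 1), rade m k x ^ digit m n k

/-- The cylinder `I_n(x) = {y : y_0 = x_0, ..., y_{n-1} = x_{n-1}}`. -/
def cyl (m : ℕ → ℕ) (n : ℕ) (x : Gm m) : Set (Gm m) := {y | ∀ j < n, y j = x j}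

/-- Vilenkin–Fourier coefficient of an integrable function. -/
def fcoef (m : ℕ → ℕ) (μ : Measure (Gm m)) (f : Gm m → ℂ) (k : ℕ) : ℂ :=
  ∫ x, f x * (starRingEnd ℂ) (psi m k x) ∂μ

/-- Partial sums of the Vilenkin–Fourier series of a function. -/
def Spart (m : ℕ → ℕ) (μ : Measure (Gm m)) (f : Gm m → ℂ) (n : ℕ) (x : Gm m) : ℂ :=
  ∑ k ∈ Finset.range n, fcoef m μ f k * psi m k x

/-- The Dirichlet kernels `D_n = Σ_{k<n} ψ_k`. -/
def Dker (m : ℕ → ℕ) (n : ℕ) (x : Gm m) : ℂ :=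
  ∑ k ∈ Finset.range n, psi m k x

/-- `f = (f^{(n)})` is a martingale w.r.t. the filtration generated by the cylinders:
each `f^{(n)}` is integrable and, for `n ≤ k`, the conditional expectation of `f^{(k)}`
on the `n`-th σ-algebra (the average on each cylinder `I_n(x)`) equals `f^{(n)}`. -/
def IsVMartingale (m : ℕ → ℕ) (μ : Measure (Gm m)) (f : ℕ → Gm m → ℂ) : Prop :=
  (∀ n, Integrable (f n) μ) ∧
  ∀ n k : ℕ, n ≤ k → ∀ x : Gm m, f n x = (Mgen m n : ℂ) * ∫ t in cyl m n x, f k t ∂μ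

/-- Vilenkin–Fourier coefficient of a martingale: `lim_k ∫ f^{(k)} ψ̄_i dμ`; since the
integral is independent of `k` once `M_k > i`, and `M_{i+1} > i`, we take `k = i+1`. -/
def mfhat (m : ℕ → ℕ) (μ : Measure (Gm m)) (f : ℕ → Gm m → ℂ) (i : ℕ) : ℂ :=
  ∫ x, f (i + 1) x * (starRingEnd ℂ) (psi m i x) ∂μ

/-- The `H_p` (quasi-)norm of a martingale: `‖sup_n |f^{(n)}|‖_{L^p(μ)}`, as an `ℝ≥0∞`. -/
def HpNorm (m : ℕ → ℕ) (μ : Measure (Gm m)) (p : ℝ) (f : ℕ → Gm m → ℂ) : ℝ≥0∞ :=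
  (∫⁻ x, (⨆ n, (‖f n x‖₊ : ℝ≥0∞)) ^ p ∂μ) ^ (1 / p)

/-!
By Paley's lemma `D_{M_n} = M_n · 1_{I_n(0)}`, so `a_k` vanishes off `I_{α_k}(0)` and
`|a_k| ≤ M_{α_k}^{1/p} = μ(I_{α_k}(0))^{-1/p}`: it is a `p`-atom. The cylinder masses alone
force `μ` to integrate functions of finitely many coordinates like the product of the uniform
measures; since a nontrivial character of `ℤ_{m_k}` averages to `0`, this gives
`∫_{I_n(x)} ψ_i = [i < M_n] ψ_i(x) / M_n`. That formula yields both the martingale property of the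
partial sums and the Fourier coefficients of `a_k`. Finally, for `p ≤ 1` the inequality
`(Σ t_k)^p ≤ Σ t_k^p` bounds `∫ sup_A |f^{(A)}|^p` by `Σ_k β_k^p`.
-/

lemma sum_range_eq_sum_zmod_val {M : Type*} [AddCommMonoid M] (N : ℕ) [NeZero N] (g : ℕ → M) :
    ∑ d ∈ range N, g d = ∑ c : ZMod N, g c.val :=
  sum_nbij' (fun d => (d : ZMod N)) ZMod.val (by simp) (fun c _ => mem_range.2 c.val_lt)
    (fun d hd => ZMod.val_cast_of_lt (mem_range.1 hd)) (fun c _ => ZMod.natCast_zmod_val c)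
    fun d hd => by rw [ZMod.val_cast_of_lt (mem_range.1 hd)]

lemma sum_range_mul_eq_sum_sum {M : Type*} [AddCommMonoid M] (f : ℕ → M) (a b : ℕ) :
    ∑ i ∈ range (a * b), f i = ∑ d ∈ range a, ∑ r ∈ range b, f (r + d * b) := by
  induction a with
  | zero => simp
  | succ a ih =>
    rw [Nat.succ_mul, sum_range_add, ih, sum_range_succ]
    simp_rw [add_comm (a * b)]

lemma sum_range_ite_lt {M : Type*} [AddCommMonoid M] (f : ℕ → M) (N K : ℕ) :
    ∑ i ∈ range N, (if i < K then f i else 0) = ∑ i ∈ range (min N K), f i := by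
  rw [← sum_filter]
  congr 1
  ext i
  simp

lemma sum_stdAddChar_mul (N : ℕ) [NeZero N] (b : ZMod N) :
    ∑ c : ZMod N, ZMod.stdAddChar (c * b) = if b = 0 then (N : ℂ) else 0 := by
  rw [AddChar.sum_mulShift b (ZMod.isPrimitive_stdAddChar N), ZMod.card]
  split_ifs <;> simp

lemma sum_stdAddChar_pow (N : ℕ) [NeZero N] {e : ℕ} (he : e < N) :
    ∑ c : ZMod N, ZMod.stdAddChar c ^ e = if e = 0 then (N : ℂ) else 0 := by
  simp_rw [← AddChar.map_nsmul_eq_pow, nsmul_eq_mul, mul_comm, sum_stdAddChar_mul,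
    ← ZMod.val_eq_zero, ZMod.val_cast_of_lt he]

section Atoms

variable {Ω E : Type*} [MeasurableSpace Ω] {μ : Measure Ω} {p : ℝ}

lemma iSup_enorm_sum_rpow_le_tsum [TopologicalSpace E] [ESeminormedAddCommMonoid E]
    (hp0 : 0 < p) (hp1 : p ≤ 1) (b : ℕ → E) (s : ℕ → Finset ℕ) :
    (⨆ A, ‖∑ k ∈ s A, b k‖ₑ) ^ p ≤ ∑' k, ‖b k‖ₑ ^ p := by
  rw [← ENNReal.le_rpow_inv_iff hp0]
  refine iSup_le fun A => (ENNReal.le_rpow_inv_iff hp0).2 ?_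
  calc ‖∑ k ∈ s A, b k‖ₑ ^ p
      ≤ (∑ k ∈ s A, ‖b k‖ₑ) ^ p := ENNReal.rpow_le_rpow (enorm_sum_le (s A) b) hp0.le
    _ ≤ ∑ k ∈ s A, ‖b k‖ₑ ^ p :=
      le_sum_of_subadditive (· ^ p) (ENNReal.zero_rpow_of_pos hp0).le
        (fun x y => ENNReal.rpow_add_le_add_rpow x y hp0.le hp1) _ _
    _ ≤ ∑' k, ‖b k‖ₑ ^ p := ENNReal.sum_le_tsum _

lemma lintegral_iSup_enorm_sum_rpow_lt_top (hp0 : 0 < p) (hp1 : p ≤ 1) {a : ℕ → Ω → ℂ}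
    (ha : ∀ k, AEMeasurable (a k) μ) (ha1 : ∀ k, ∫⁻ x, ‖a k x‖ₑ ^ p ∂μ ≤ 1) {β : ℕ → ℝ}
    (hβ : ∀ k, 0 ≤ β k) (hsum : Summable fun k => β k ^ p) (s : ℕ → Finset ℕ) :
    ∫⁻ x, (⨆ A, ‖∑ k ∈ s A, (β k : ℂ) * a k x‖ₑ) ^ p ∂μ < ⊤ := by
  have hβp : ∀ k, ‖(β k : ℂ)‖ₑ ^ p = ENNReal.ofReal (β k ^ p) := fun k => by
    rw [← ofReal_norm, Complex.norm_real, Real.norm_of_nonneg (hβ k),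
      ENNReal.ofReal_rpow_of_nonneg (hβ k) hp0.le]
  calc ∫⁻ x, (⨆ A, ‖∑ k ∈ s A, (β k : ℂ) * a k x‖ₑ) ^ p ∂μ
      ≤ ∫⁻ x, ∑' k, ‖(β k : ℂ) * a k x‖ₑ ^ p ∂μ :=
        lintegral_mono fun x => iSup_enorm_sum_rpow_le_tsum hp0 hp1 _ s
    _ = ∑' k, ENNReal.ofReal (β k ^ p) * ∫⁻ x, ‖a k x‖ₑ ^ p ∂μ := by
        simp_rw [enorm_mul, ENNReal.mul_rpow_of_nonneg _ _ hp0.le, hβp]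
        rw [lintegral_tsum fun k => ((ha k).enorm.pow_const p).const_mul _]
        simp_rw [lintegral_const_mul' _ _ ENNReal.ofReal_ne_top]
    _ ≤ ∑' k, ENNReal.ofReal (β k ^ p) :=
        ENNReal.tsum_le_tsum fun k => mul_le_of_le_one_right' (ha1 k)
    _ < ⊤ := by
        rw [← ENNReal.ofReal_tsum_of_nonneg (fun k => Real.rpow_nonneg (hβ k) p) hsum]
        exact ENNReal.ofReal_lt_top

lemma lintegral_enorm_rpow_le_one [ENorm E] (hp : 0 < p) {s : Set Ω} (hs : MeasurableSet s)
    {a : Ω → E} (h0 : ∀ x ∉ s, ‖a x‖ₑ = 0) (hbd : ∀ x ∈ s, ‖a x‖ₑ ^ p ≤ (μ s)⁻¹) :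
    ∫⁻ x, ‖a x‖ₑ ^ p ∂μ ≤ 1 :=
  calc ∫⁻ x, ‖a x‖ₑ ^ p ∂μ ≤ ∫⁻ x, s.indicator (fun _ => (μ s)⁻¹) x ∂μ := by
        refine lintegral_mono fun x => ?_
        by_cases hx : x ∈ s
        · simpa [hx] using hbd x hx
        · simp [hx, h0 x hx, ENNReal.zero_rpow_of_pos hp]
    _ = (μ s)⁻¹ * μ s := lintegral_indicator_const hs _
    _ ≤ 1 := ENNReal.inv_mul_le_one _

end Atoms

section Arithmetic

variable {m : ℕ → ℕ}

lemma Mgen_succ (k : ℕ) : Mgen m (k + 1) = m k * Mgen m k := rfl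

lemma Mgen_eq_prod (n : ℕ) : Mgen m n = ∏ k ∈ range n, m k := by
  induction n with
  | zero => rfl
  | succ n ih => rw [Mgen_succ, ih, prod_range_succ, mul_comm]

lemma Mgen_mul_prod_Ico {n T : ℕ} (h : n ≤ T) : Mgen m n * ∏ k ∈ Ico n T, m k = Mgen m T := by
  rw [Mgen_eq_prod, Mgen_eq_prod, prod_range_mul_prod_Ico _ h]

lemma Mgen_dvd_Mgen {j n : ℕ} (h : j ≤ n) : Mgen m j ∣ Mgen m n :=
  Dvd.intro _ (Mgen_mul_prod_Ico h)

lemma digit_eq_zero_of_lt {n j : ℕ} (h : n < Mgen m j) : digit m n j = 0 := by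
  simp [digit, Nat.div_eq_of_lt h]

lemma lt_Mgen (hm : ∀ k, 2 ≤ m k) (k : ℕ) : k < Mgen m k := by
  induction k with
  | zero => exact Nat.one_pos
  | succ k ih => rw [Mgen_succ]; nlinarith [hm k]

lemma neZero_of_two_le (hm : ∀ k, 2 ≤ m k) (k : ℕ) : NeZero (m k) := ⟨by linarith [hm k]⟩

variable [∀ k, NeZero (m k)]

lemma Mgen_pos (n : ℕ) : 0 < Mgen m n := by
  rw [Mgen_eq_prod]
  exact prod_pos fun k _ => Nat.pos_of_ne_zero (NeZero.ne (m k))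

lemma Mgen_mono : Monotone (Mgen m) := fun _ _ h =>
  Nat.le_of_dvd (Mgen_pos _) (Mgen_dvd_Mgen h)

lemma digit_lt (n j : ℕ) : digit m n j < m j := Nat.mod_lt _ (Nat.pos_of_ne_zero (NeZero.ne _))

lemma lt_Mgen_of_digit_eq_zero {i k : ℕ} (hi : i < Mgen m (k + 1)) (hd : digit m i k = 0) :
    i < Mgen m k := by
  rw [digit, Nat.mod_eq_of_lt ((Nat.div_lt_iff_lt_mul (Mgen_pos k)).2 hi),
    Nat.div_eq_zero_iff] at hd
  exact hd.resolve_left (Mgen_pos k).ne'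

lemma lt_Mgen_iff_digits_eq_zero {i n T : ℕ} (hnT : n ≤ T) (hi : i < Mgen m T) :
    i < Mgen m n ↔ ∀ k ∈ Ico n T, digit m i k = 0 := by
  refine ⟨fun h k hk => digit_eq_zero_of_lt (h.trans_le (Mgen_mono (mem_Ico.1 hk).1)), ?_⟩
  induction T, hnT using Nat.le_induction with
  | base => exact fun _ => hi
  | succ T hnT ih =>
    intro hd
    exact ih (lt_Mgen_of_digit_eq_zero hi (hd T (mem_Ico.2 ⟨hnT, T.lt_succ_self⟩)))
      fun k hk => hd k (Ico_subset_Ico_right T.le_succ hk)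

lemma digit_add_mul {r d n : ℕ} (hr : r < Mgen m n) (hd : d < m n) (j : ℕ) :
    digit m (r + d * Mgen m n) j = if j < n then digit m r j else if j = n then d else 0 := by
  rcases lt_trichotomy j n with h | rfl | h
  · obtain ⟨t, ht⟩ := Mgen_dvd_Mgen (m := m) (Nat.succ_le_of_lt h)
    rw [if_pos h, digit, digit, Mgen_succ] at *
    rw [ht, show d * (m j * Mgen m j * t) = (d * t * m j) * Mgen m j by ring,
      Nat.add_mul_div_right _ _ (Mgen_pos j), Nat.add_mul_mod_self_right]
  · rw [if_neg (lt_irrefl _), if_pos rfl, digit, Nat.add_mul_div_right _ _ (Mgen_pos j),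
      Nat.div_eq_of_lt hr, zero_add, Nat.mod_eq_of_lt hd]
  · rw [if_neg (by omega), if_neg h.ne']
    refine digit_eq_zero_of_lt (lt_of_lt_of_le ?_ (Mgen_mono (Nat.succ_le_of_lt h)))
    rw [Mgen_succ]
    nlinarith

end Arithmetic

section Vilenkin

variable {m : ℕ → ℕ}

lemma rade_eq_stdAddChar [∀ k, NeZero (m k)] (k : ℕ) (x : Gm m) :
    rade m k x = ZMod.stdAddChar (x k) := by
  rw [ZMod.stdAddChar_apply, ZMod.toCircle_apply, rade]

lemma norm_rade (k : ℕ) (x : Gm m) : ‖rade m k x‖ = 1 := by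
  rw [rade, Complex.norm_exp]
  simp

lemma norm_psi (n : ℕ) (x : Gm m) : ‖psi m n x‖ = 1 := by
  simp [psi, norm_rade]

lemma psi_apply_zero (i : ℕ) : psi m i 0 = 1 := by
  simp [psi, rade]

lemma sum_range_rade_pow [∀ k, NeZero (m k)] (n : ℕ) (x : Gm m) :
    ∑ d ∈ range (m n), rade m n x ^ d = if x n = 0 then (m n : ℂ) else 0 := by
  simp_rw [sum_range_eq_sum_zmod_val, rade_eq_stdAddChar, ← AddChar.map_nsmul_eq_pow,
    nsmul_eq_mul, ZMod.natCast_zmod_val, sum_stdAddChar_mul]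

lemma psi_eq_prod (hm : ∀ k, 2 ≤ m k) {i T : ℕ} (h : i < Mgen m T) (x : Gm m) :
    psi m i x = ∏ k ∈ range T, rade m k x ^ digit m i k := by
  have := neZero_of_two_le hm
  have hvanish : ∀ S, i < Mgen m S → ∀ k ∈ range (max (i + 1) T), k ∉ range S →
      rade m k x ^ digit m i k = 1 := fun S hS k _ hk => by
    rw [digit_eq_zero_of_lt (hS.trans_le (Mgen_mono (by simpa using hk))), pow_zero]
  have hi : i < Mgen m (i + 1) := (lt_Mgen hm (i + 1)).trans' i.lt_succ_self
  rw [psi, prod_subset (range_subset_range.2 (le_max_left _ _)) (hvanish _ hi),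
    ← prod_subset (range_subset_range.2 (le_max_right _ _)) (hvanish _ h)]

lemma psi_add_mul (hm : ∀ k, 2 ≤ m k) {r d n : ℕ} (hr : r < Mgen m n) (hd : d < m n)
    (x : Gm m) : psi m (r + d * Mgen m n) x = psi m r x * rade m n x ^ d := by
  have := neZero_of_two_le hm
  have hlt : r + d * Mgen m n < Mgen m (n + 1) := by rw [Mgen_succ]; nlinarith
  rw [psi_eq_prod hm hlt, psi_eq_prod hm hr, prod_range_succ, digit_add_mul hr hd n,
    if_neg n.lt_irrefl, if_pos rfl]
  congr 1
  exact prod_congr rfl fun k hk => by rw [digit_add_mul hr hd k, if_pos (mem_range.1 hk)]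

lemma mem_cyl_succ {n : ℕ} {x y : Gm m} : y ∈ cyl m (n + 1) x ↔ y ∈ cyl m n x ∧ y n = x n := by
  simp only [cyl, Set.mem_ofPred_eq, Nat.lt_succ_iff_lt_or_eq, or_imp, forall_and, forall_eq]

lemma cyl_succ_subset (n : ℕ) (x : Gm m) : cyl m (n + 1) x ⊆ cyl m n x :=
  fun _ hy => (mem_cyl_succ.1 hy).1

lemma cyl_zero (x : Gm m) : cyl m 0 x = Set.univ := by simp [cyl]

lemma cyl_eq_iUnion_cyl_succ (n : ℕ) (x : Gm m) :
    cyl m n x = ⋃ c : ZMod (m n), cyl m (n + 1) (Function.update x n c) := by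
  ext y
  simp only [Set.mem_iUnion, mem_cyl_succ, Function.update_self]
  refine ⟨fun h => ⟨y n, ?_, rfl⟩, fun ⟨c, h, _⟩ => ?_⟩ <;>
  · intro j hj
    simp_all [cyl, Function.update_of_ne hj.ne]

lemma pairwise_disjoint_cyl_succ (n : ℕ) (x : Gm m) :
    Pairwise (Function.onFun Disjoint fun c : ZMod (m n) =>
      cyl m (n + 1) (Function.update x n c)) := by
  refine fun c c' hne => Set.disjoint_left.2 fun y hy hy' => hne ?_
  rw [mem_cyl_succ, Function.update_self] at hy hy'
  exact hy.2.symm.trans hy'.2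

lemma measurableSet_cyl (n : ℕ) (x : Gm m) : MeasurableSet (cyl m n x) := by
  have : cyl m n x = ⋂ j ∈ Set.Iio n, (fun y : Gm m => y j) ⁻¹' {x j} := by ext; simp [cyl]
  rw [this]
  exact .biInter (Set.to_countable _) fun j _ => measurable_pi_apply j (.singleton _)

lemma Dker_Mgen_succ (hm : ∀ k, 2 ≤ m k) (n : ℕ) (x : Gm m) :
    Dker m (Mgen m (n + 1)) x = Dker m (Mgen m n) x * ∑ d ∈ range (m n), rade m n x ^ d := by
  rw [Dker, Mgen_succ, sum_range_mul_eq_sum_sum, Dker, mul_sum]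
  refine sum_congr rfl fun d hd => ?_
  rw [sum_mul]
  exact sum_congr rfl fun r hr => psi_add_mul hm (mem_range.1 hr) (mem_range.1 hd) x

/-- Paley's lemma. -/
lemma Dker_Mgen (hm : ∀ k, 2 ≤ m k) (n : ℕ) :
    Dker m (Mgen m n) = (cyl m n 0).indicator (fun _ => (Mgen m n : ℂ)) := by
  have := neZero_of_two_le hm
  funext x
  induction n with
  | zero => simp [Dker, cyl, psi, digit, Mgen]
  | succ n ih =>
    rw [Dker_Mgen_succ hm, ih, sum_range_rade_pow]
    by_cases hx : x ∈ cyl m n 0 <;> by_cases hxn : x n = 0 <;>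
      simp [Set.indicator, mem_cyl_succ, hx, hxn, Mgen_succ, mul_comm]

def Dblock (m : ℕ → ℕ) (j : ℕ) (x : Gm m) : ℂ := Dker m (Mgen m (j + 1)) x - Dker m (Mgen m j) x

lemma Dker_Mgen_min_sub (j n : ℕ) (x : Gm m) :
    Dker m (Mgen m (min (j + 1) n)) x - Dker m (Mgen m (min j n)) x =
      if j < n then Dblock m j x else 0 := by
  split_ifs with h
  · rw [min_eq_left h, min_eq_left h.le, Dblock]
  · rw [min_eq_right (by omega), min_eq_right (by omega), sub_self]

lemma Dblock_eq_zero_of_notMem (hm : ∀ k, 2 ≤ m k) {j : ℕ} {x : Gm m} (hx : x ∉ cyl m j 0) :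
    Dblock m j x = 0 := by
  rw [Dblock, Dker_Mgen hm, Dker_Mgen hm, Set.indicator_of_notMem hx,
    Set.indicator_of_notMem fun h => hx (cyl_succ_subset j 0 h), sub_zero]

lemma norm_Dblock_le (hm : ∀ k, 2 ≤ m k) (j : ℕ) (x : Gm m) :
    ‖Dblock m j x‖ ≤ Mgen m (j + 1) := by
  have hMj : Mgen m j ≤ Mgen m (j + 1) := Nat.le_mul_of_pos_left _ (by linarith [hm j])
  rw [Dblock, Dker_Mgen hm, Dker_Mgen hm]
  by_cases h1 : x ∈ cyl m (j + 1) 0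
  · rw [Set.indicator_of_mem h1, Set.indicator_of_mem (cyl_succ_subset j 0 h1),
      ← Nat.cast_sub hMj, Complex.norm_natCast]
    exact_mod_cast Nat.sub_le _ _
  · by_cases h0 : x ∈ cyl m j 0 <;> simp [h1, h0, hMj]

lemma enorm_atom_rpow_le (hm : ∀ k, 2 ≤ m k) {lam : ℕ} (hlam : ∀ k, m k ≤ lam) {p : ℝ}
    (hp : 0 < p) (j : ℕ) (x : Gm m) :
    ‖((((Mgen m j : ℝ) ^ (1 / p - 1) / lam : ℝ) : ℂ)) * Dblock m j x‖ₑ ^ p ≤ Mgen m j := by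
  have := neZero_of_two_le hm
  have hM : (0 : ℝ) < Mgen m j := Nat.cast_pos.2 (Mgen_pos j)
  have hlam0 : (0 : ℝ) < lam := by exact_mod_cast (by linarith [hm 0, hlam 0] : 0 < lam)
  have hnorm : ‖((((Mgen m j : ℝ) ^ (1 / p - 1) / lam : ℝ) : ℂ)) * Dblock m j x‖ ≤
      (Mgen m j : ℝ) ^ (1 / p) := by
    rw [norm_mul, Complex.norm_real, Real.norm_of_nonneg (by positivity)]
    calc (Mgen m j : ℝ) ^ (1 / p - 1) / lam * ‖Dblock m j x‖
        ≤ (Mgen m j : ℝ) ^ (1 / p - 1) / lam * (lam * Mgen m j) := by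
          gcongr
          refine (norm_Dblock_le hm j x).trans ?_
          rw [Mgen_succ, Nat.cast_mul]
          gcongr
          exact_mod_cast hlam j
      _ = (Mgen m j : ℝ) ^ (1 / p) := by
          rw [← mul_assoc, div_mul_cancel₀ _ hlam0.ne', ← Real.rpow_add_one hM.ne', sub_add_cancel]
  rw [← ofReal_norm, ENNReal.ofReal_rpow_of_nonneg (norm_nonneg _) hp.le, ← ENNReal.ofReal_natCast]
  refine ENNReal.ofReal_le_ofReal ((Real.rpow_le_rpow (norm_nonneg _) hnorm hp.le).trans_eq ?_)
  rw [one_div, Real.rpow_inv_rpow hM.le hp.ne']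

@[fun_prop]
lemma measurable_rade (k : ℕ) : Measurable (rade m k) :=
  (Measurable.of_discrete (f := fun c : ZMod (m k) =>
    Complex.exp (2 * Real.pi * Complex.I * (c.val : ℂ) / m k))).comp (measurable_pi_apply k)

@[fun_prop]
lemma measurable_psi (n : ℕ) : Measurable (psi m n) := by
  unfold psi; fun_prop

variable {μ : Measure (Gm m)}

lemma isProbabilityMeasure_of_measure_cyl (hμ : ∀ n x, μ (cyl m n x) = (Mgen m n : ℝ≥0∞)⁻¹) :
    IsProbabilityMeasure μ :=
  ⟨by rw [← cyl_zero 0, hμ]; simp [Mgen]⟩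

lemma integrable_psi [IsFiniteMeasure μ] (n : ℕ) : Integrable (psi m n) μ :=
  .of_bound (measurable_psi n).aestronglyMeasurable 1 (ae_of_all _ fun x => (norm_psi n x).le)

lemma integrable_Dker [IsFiniteMeasure μ] (n : ℕ) : Integrable (Dker m n) μ := by
  unfold Dker
  exact integrable_finsetSum _ fun k _ => integrable_psi k

lemma integrable_Dker_mul_conj_psi [IsFiniteMeasure μ] (n i : ℕ) :
    Integrable (fun x => Dker m n x * (starRingEnd ℂ) (psi m i x)) μ :=
  (integrable_Dker n).mul_bdd (by fun_prop)
    (ae_of_all _ fun x => by rw [RCLike.norm_conj, norm_psi])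

lemma integrable_prod_coord [∀ k, NeZero (m k)] [IsFiniteMeasure μ] (g : ∀ k, ZMod (m k) → ℂ)
    (T : ℕ) : Integrable (fun y : Gm m => ∏ k ∈ range T, g k (y k)) μ := by
  refine .of_bound (Finset.measurable_prod _ fun k _ =>
      Measurable.of_discrete.comp (measurable_pi_apply k)).aestronglyMeasurable
    (∏ k ∈ range T, ∑ c, ‖g k c‖) (ae_of_all _ fun y => ?_)
  rw [norm_prod]
  exact prod_le_prod (fun _ _ => norm_nonneg _)
    fun k _ => single_le_sum (fun c _ => norm_nonneg (g k c)) (mem_univ (y k))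

lemma prod_range_succ_update (g : ∀ k, ZMod (m k) → ℂ) (n : ℕ) (x : Gm m) (c : ZMod (m n)) :
    ∏ k ∈ range (n + 1), g k (Function.update x n c k) = (∏ k ∈ range n, g k (x k)) * g n c := by
  rw [prod_range_succ, Function.update_self]
  congr 1
  exact prod_congr rfl fun k hk => by rw [Function.update_of_ne (mem_range.1 hk).ne]

/-- Fubini for the product of the uniform measures on the coordinates, obtained from the
cylinder masses alone by splitting `cyl m n x` into the `m n` cylinders of the next level. -/
lemma setIntegral_cyl_prod [∀ k, NeZero (m k)]
    (hμ : ∀ n x, μ (cyl m n x) = (Mgen m n : ℝ≥0∞)⁻¹)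
    (g : ∀ k, ZMod (m k) → ℂ) {n T : ℕ} (hnT : n ≤ T) (x : Gm m) :
    ∫ y in cyl m n x, ∏ k ∈ range T, g k (y k) ∂μ =
      (Mgen m T : ℂ)⁻¹ * (∏ k ∈ range n, g k (x k)) * ∏ k ∈ Ico n T, ∑ c, g k c := by
  have := isProbabilityMeasure_of_measure_cyl hμ
  induction hnT using Nat.decreasingInduction generalizing x with
  | self =>
    have hconst : Set.EqOn (fun y : Gm m => ∏ k ∈ range T, g k (y k))
        (fun _ => ∏ k ∈ range T, g k (x k)) (cyl m T x) := fun y hy =>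
      prod_congr rfl fun k hk => by rw [hy k (mem_range.1 hk)]
    rw [setIntegral_congr_fun (measurableSet_cyl T x) hconst, setIntegral_const, measureReal_def,
      hμ, Ico_self, prod_empty, mul_one, ENNReal.toReal_inv, ENNReal.toReal_natCast,
      Complex.real_smul]
    push_cast
    rfl
  | of_succ n hnT ih =>
    rw [cyl_eq_iUnion_cyl_succ, integral_iUnion_fintype (fun _ => measurableSet_cyl _ _)
      (pairwise_disjoint_cyl_succ n x) fun _ => (integrable_prod_coord g T).integrableOn]
    simp_rw [ih, prod_range_succ_update, prod_eq_prod_Ico_succ_bot hnT, ← sum_mul, ← mul_sum]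
    ring

lemma setIntegral_psi_cyl (hm : ∀ k, 2 ≤ m k) (hμ : ∀ n x, μ (cyl m n x) = (Mgen m n : ℝ≥0∞)⁻¹)
    (i n : ℕ) (x : Gm m) :
    ∫ y in cyl m n x, psi m i y ∂μ = if i < Mgen m n then (Mgen m n : ℂ)⁻¹ * psi m i x else 0 := by
  have := neZero_of_two_le hm
  set T := n + i + 1
  have hiT : i < Mgen m T := (lt_Mgen hm T).trans' (by omega)
  have hnT : n ≤ T := by omega
  have hpsi : ∀ y, psi m i y = ∏ k ∈ range T, ZMod.stdAddChar (y k) ^ digit m i k := fun y => by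
    rw [psi_eq_prod hm hiT]
    simp_rw [rade_eq_stdAddChar]
  simp_rw [hpsi, setIntegral_cyl_prod hμ (fun k c => ZMod.stdAddChar c ^ digit m i k) hnT,
    sum_stdAddChar_pow _ (digit_lt _ _), prod_ite_zero, ← lt_Mgen_iff_digits_eq_zero hnT hiT]
  split_ifs with hin
  · rw [← hpsi, psi_eq_prod hm hin, ← Mgen_mul_prod_Ico hnT]
    simp_rw [rade_eq_stdAddChar]
    have hP : ∏ k ∈ Ico n T, (m k : ℂ) ≠ 0 :=
      prod_ne_zero_iff.2 fun k _ => Nat.cast_ne_zero.2 (NeZero.ne (m k))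
    have hMn : Mgen m n ≠ 0 := (Mgen_pos n).ne'
    push_cast
    field_simp
  · rw [mul_zero]

lemma setIntegral_Dker_Mgen (hm : ∀ k, 2 ≤ m k)
    (hμ : ∀ n x, μ (cyl m n x) = (Mgen m n : ℝ≥0∞)⁻¹) (j n : ℕ) (x : Gm m) :
    ∫ y in cyl m n x, Dker m (Mgen m j) y ∂μ = (Mgen m n : ℂ)⁻¹ * Dker m (Mgen m (min j n)) x := by
  have := neZero_of_two_le hm
  have := isProbabilityMeasure_of_measure_cyl hμ
  simp_rw [Dker, integral_finsetSum _ fun i _ => (integrable_psi i).integrableOn,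
    setIntegral_psi_cyl hm hμ, sum_range_ite_lt, ← mul_sum, Mgen_mono.map_min]

lemma setIntegral_Dblock (hm : ∀ k, 2 ≤ m k) (hμ : ∀ n x, μ (cyl m n x) = (Mgen m n : ℝ≥0∞)⁻¹)
    (j n : ℕ) (x : Gm m) :
    ∫ y in cyl m n x, Dblock m j y ∂μ = if j < n then (Mgen m n : ℂ)⁻¹ * Dblock m j x else 0 := by
  have := isProbabilityMeasure_of_measure_cyl hμ
  change ∫ y in cyl m n x, (Dker m (Mgen m (j + 1)) y - Dker m (Mgen m j) y) ∂μ = _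
  rw [integral_sub (integrable_Dker _).integrableOn (integrable_Dker _).integrableOn,
    setIntegral_Dker_Mgen hm hμ, setIntegral_Dker_Mgen hm hμ, ← mul_sub, Dker_Mgen_min_sub]
  split_ifs <;> simp

lemma fcoef_Dker_Mgen (hm : ∀ k, 2 ≤ m k) (hμ : ∀ n x, μ (cyl m n x) = (Mgen m n : ℝ≥0∞)⁻¹)
    (j i : ℕ) : fcoef m μ (Dker m (Mgen m j)) i = if i < Mgen m j then 1 else 0 := by
  have := neZero_of_two_le hm
  have hM : (Mgen m j : ℂ) ≠ 0 := Nat.cast_ne_zero.2 (Mgen_pos j).ne'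
  have hind : ∀ x, (cyl m j 0).indicator (fun _ => (Mgen m j : ℂ)) x * (starRingEnd ℂ) (psi m i x) =
      (cyl m j 0).indicator (fun x => (Mgen m j : ℂ) * (starRingEnd ℂ) (psi m i x)) x :=
    fun x => by by_cases hx : x ∈ cyl m j 0 <;> simp [hx]
  rw [fcoef, Dker_Mgen hm]
  simp_rw [hind]
  rw [integral_indicator (measurableSet_cyl _ _), integral_const_mul, integral_conj,
    setIntegral_psi_cyl hm hμ, psi_apply_zero]
  split_ifs <;> simp [hM]

lemma fcoef_const_mul_Dblock (hm : ∀ k, 2 ≤ m k)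
    (hμ : ∀ n x, μ (cyl m n x) = (Mgen m n : ℝ≥0∞)⁻¹) (c : ℂ) (j i : ℕ) :
    fcoef m μ (fun y => c * Dblock m j y) i =
      c * ((if i < Mgen m (j + 1) then 1 else 0) - if i < Mgen m j then 1 else 0) := by
  have := isProbabilityMeasure_of_measure_cyl hμ
  simp_rw [← fcoef_Dker_Mgen hm hμ, fcoef, Dblock, mul_assoc, sub_mul, integral_const_mul,
    integral_sub (integrable_Dker_mul_conj_psi _ _) (integrable_Dker_mul_conj_psi _ _)]

lemma Spart_const_mul_Dblock (hm : ∀ k, 2 ≤ m k)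
    (hμ : ∀ n x, μ (cyl m n x) = (Mgen m n : ℝ≥0∞)⁻¹) (c : ℂ) (j A : ℕ) (x : Gm m) :
    Spart m μ (fun y => c * Dblock m j y) (Mgen m A) x = if j < A then c * Dblock m j x else 0 := by
  have := neZero_of_two_le hm
  simp_rw [Spart, fcoef_const_mul_Dblock hm hμ, mul_assoc, ← mul_sum, sub_mul, sum_sub_distrib,
    ite_mul, one_mul, zero_mul, sum_range_ite_lt, ← Mgen_mono.map_min, ← Dker.eq_def, min_comm A,
    Dker_Mgen_min_sub]
  split_ifs <;> simp

lemma isVMartingale_sum_filter [∀ k, NeZero (m k)] {b : ℕ → Gm m → ℂ} {j : ℕ → ℕ}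
    (hj : ∀ k, k ≤ j k) (hint : ∀ k, Integrable (b k) μ)
    (hb : ∀ k n x, ∫ y in cyl m n x, b k y ∂μ = if j k < n then (Mgen m n : ℂ)⁻¹ * b k x else 0) :
    IsVMartingale m μ fun A x => ∑ k ∈ (range A).filter (fun k => j k < A), b k x := by
  refine ⟨fun A => integrable_finsetSum _ fun k _ => hint k, fun n A hnA x => ?_⟩
  have hM : (Mgen m n : ℂ) ≠ 0 := Nat.cast_ne_zero.2 (Mgen_pos n).ne'
  have hfilter : ((range A).filter (fun k => j k < A)).filter (fun k => j k < n) =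
      (range n).filter (fun k => j k < n) := by
    ext k
    simp only [mem_filter, mem_range]
    have := hj k
    omega
  rw [integral_finsetSum _ fun k _ => (hint k).integrableOn]
  simp_rw [hb, ← sum_filter, hfilter, mul_sum, mul_inv_cancel_left₀ hM]

end Vilenkin

theorem atomic_series_is_martingale_in_Hp_general
    (m : ℕ → ℕ) (hm : ∀ k, 2 ≤ m k) (lam : ℕ) (hlam : ∀ k, m k ≤ lam)
    (μ : Measure (Gm m)) (hμ : ∀ n x, μ (cyl m n x) = ((Mgen m n : ℝ≥0∞))⁻¹)
    (p : ℝ) (hp0 : 0 < p) (hp1 : p < 1)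
    (α : ℕ → ℕ) (hα : StrictMono α)
    (β : ℕ → ℝ) (hβ : ∀ k, 0 ≤ β k) (hsum : Summable fun k => β k ^ p) :
    let a : ℕ → Gm m → ℂ := fun k x =>
      (((Mgen m (α k) : ℝ) ^ (1 / p - 1) / (lam : ℝ) : ℝ) : ℂ) *
        (Dker m (Mgen m (α k + 1)) x - Dker m (Mgen m (α k)) x)
    let f : ℕ → Gm m → ℂ := fun A x =>
      ∑ k ∈ (Finset.range A).filter (fun k => α k < A), (β k : ℂ) * a k x
    IsVMartingale m μ f ∧
    (∀ A k : ℕ, ∀ x : Gm m,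
      Spart m μ (a k) (Mgen m A) x = if α k < A then a k x else 0) ∧
    HpNorm m μ p f < ⊤ := by
  intro a f
  have := neZero_of_two_le hm
  have := isProbabilityMeasure_of_measure_cyl hμ
  have ha : ∀ k x, a k x = _ * Dblock m (α k) x := fun k x => rfl
  have hint : ∀ k, Integrable (a k) μ := fun k =>
    ((integrable_Dker _).sub (integrable_Dker _)).const_mul _
  have hatom : ∀ k, ∫⁻ x, ‖a k x‖ₑ ^ p ∂μ ≤ 1 := fun k => by
    refine lintegral_enorm_rpow_le_one hp0 (measurableSet_cyl (α k) 0)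
      (fun x hx => by rw [ha, Dblock_eq_zero_of_notMem hm hx, mul_zero, enorm_zero]) fun x _ => ?_
    rw [hμ, inv_inv]
    exact enorm_atom_rpow_le hm hlam hp0 (α k) x
  refine ⟨isVMartingale_sum_filter (fun k => hα.le_apply) (fun k => (hint k).const_mul _)
    fun k n x => ?_, fun A k x => Spart_const_mul_Dblock hm hμ _ (α k) A x, ?_⟩
  · simp_rw [integral_const_mul, ha, integral_const_mul, setIntegral_Dblock hm hμ]
    split_ifs <;> ring
  · exact ENNReal.rpow_lt_top_of_nonneg (by positivity) (lintegral_iSup_enorm_sum_rpow_lt_top hp0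
      hp1.le (fun k => (hint k).aemeasurable) hatom hβ hsum _).ne

/-- Given a strictly increasing sequence `(α_k)` of positive integers and nonnegative
reals `(β_k)` with `Σ β_k^p < ∞`, the sequence `f^{(A)} = Σ_{α_k < A} β_k a_k`, where
`a_k = (M_{α_k}^{1/p-1}/λ)(D_{M_{α_k+1}} - D_{M_{α_k}})`, is a martingale, satisfies
`S_{M_A} a_k = a_k` for `α_k < A` and `S_{M_A} a_k = 0` for `α_k ≥ A`, and belongs
to `H_p(G_m)`. -/
theorem atomic_series_is_martingale_in_Hp
    (m : ℕ → ℕ) (hm : ∀ k, 2 ≤ m k) (lam : ℕ) (hlam : ∀ k, m k ≤ lam)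
    (μ : Measure (Gm m)) (hμ : ∀ n x, μ (cyl m n x) = ((Mgen m n : ℝ≥0∞))⁻¹)
    (p : ℝ) (hp0 : 0 < p) (hp1 : p < 1)
    (α : ℕ → ℕ) (hα : StrictMono α) (hα0 : ∀ k, 0 < α k)
    (β : ℕ → ℝ) (hβ : ∀ k, 0 ≤ β k) (hsum : Summable fun k => β k ^ p) :
    let a : ℕ → Gm m → ℂ := fun k x =>
      (((Mgen m (α k) : ℝ) ^ (1 / p - 1) / (lam : ℝ) : ℝ) : ℂ) *
        (Dker m (Mgen m (α k + 1)) x - Dker m (Mgen m (α k)) x)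
    let f : ℕ → Gm m → ℂ := fun A x =>
      ∑ k ∈ (Finset.range A).filter (fun k => α k < A), (β k : ℂ) * a k x
    IsVMartingale m μ f ∧
    (∀ A k : ℕ, ∀ x : Gm m,
      Spart m μ (a k) (Mgen m A) x = if α k < A then a k x else 0) ∧
    HpNorm m μ p f < ⊤ :=
  atomic_series_is_martingale_in_Hp_general m hm lam hlam μ hμ p hp0 hp1 α hα β hβ hsum

end
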